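/- arXiv:0711.3557 — 2 statements merged into one kernel-verified Lean document; each statement's English description precedes it below -/
import Mathlib

section
/- Let $\mu$ be a finite positive Borel measure on the unit circle $\mathbb{T}$ and let $0 < p < 1$. Then the Cauchy transform $F(z) = \int_{\mathbb{T}} \frac{1}{\zeta - z}\, d\mu(\zeta)$, analytic on the open unit disk, belongs to the Hardy class $H^p(\mathbb{D})$, i.e., $\sup_{0 \le r < 1} \int_0^{2\pi} |F(re^{i\theta})|^p \, d\theta < \infty$. -/
/-!
Write `M = μ(𝕋)` and `G(z) = ∫ ζ / (ζ - z) dμ(ζ) = M + z F(z)`. Since `w ↦ 1 / (1 - w)` maps the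
unit disk into the half plane `Re > 1/2`, `Re G ≥ M / 2 > 0` on the disk, so `G ^ p` is holomorphic
there and `cos (pπ/2) |G|^p ≤ Re (G ^ p)`. The mean value property for the holomorphic function
`G ^ p` then bounds the circle means of `|G|^p` by `M ^ p / cos (pπ/2)`, uniformly in `r`, and
`|F| ≤ 2 (|G| + M)` transfers the bound to `F`.
-/

open MeasureTheory Metric Complex Set Real

theorem cos_mul_norm_rpow_le_re_cpow {p : ℝ} (hp0 : 0 ≤ p) (hp2 : p ≤ 2) {w : ℂ}
    (hw : 0 < w.re) : Real.cos (p * (π / 2)) * ‖w‖ ^ p ≤ (w ^ (p : ℂ)).re := by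
  rw [cpow_ofReal_re, mul_comm]
  refine mul_le_mul_of_nonneg_left ?_ (by positivity)
  rw [← Real.cos_abs (arg w * p)]
  apply Real.cos_le_cos_of_nonneg_of_le_pi (abs_nonneg _) (by nlinarith [Real.pi_pos])
  rw [abs_mul, abs_of_nonneg hp0, mul_comm]
  exact mul_le_mul_of_nonneg_left (abs_arg_lt_pi_div_two_iff.2 (Or.inl hw)).le hp0

theorem circleAverage_norm_rpow_le_of_re_pos {g : ℂ → ℂ} {c : ℂ} {R p : ℝ}
    (hg : DifferentiableOn ℂ g (closedBall c |R|)) (hre : ∀ z ∈ closedBall c |R|, 0 < (g z).re)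
    (hp0 : 0 ≤ p) (hp1 : p < 1) :
    circleAverage (fun z ↦ ‖g z‖ ^ p) c R ≤ ‖g c‖ ^ p / Real.cos (p * (π / 2)) := by
  have hcos : 0 < Real.cos (p * (π / 2)) :=
    Real.cos_pos_of_mem_Ioo ⟨by nlinarith [Real.pi_pos], by nlinarith [Real.pi_pos]⟩
  have hgp : DifferentiableOn ℂ (fun z ↦ g z ^ (p : ℂ)) (closedBall c |R|) :=
    hg.cpow (differentiableOn_const _) fun z hz ↦ mem_slitPlane_iff.2 (Or.inl (hre z hz))
  have hint_norm : CircleIntegrable (fun z ↦ ‖g z‖ ^ p) c R :=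
    ((hg.continuousOn.norm.rpow_const fun _ _ ↦ Or.inr hp0).mono
      sphere_subset_closedBall).circleIntegrable'
  have hint_cpow : CircleIntegrable (fun z ↦ g z ^ (p : ℂ)) c R :=
    (hgp.continuousOn.mono sphere_subset_closedBall).circleIntegrable'
  have hmean : circleAverage (fun z ↦ g z ^ (p : ℂ)) c R = g c ^ (p : ℂ) :=
    (hgp.diffContOnCl_ball subset_rfl).circleAverage
  rw [le_div_iff₀ hcos, mul_comm, ← smul_eq_mul, ← circleAverage_fun_smul]
  calc circleAverage (fun z ↦ Real.cos (p * (π / 2)) • ‖g z‖ ^ p) c R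
      ≤ circleAverage (fun z ↦ (g z ^ (p : ℂ)).re) c R :=
        circleAverage_mono hint_norm.const_smul
          ((continuous_re.comp_continuousOn hgp.continuousOn).mono
            sphere_subset_closedBall).circleIntegrable'
          fun z hz ↦ cos_mul_norm_rpow_le_re_cpow hp0 (by linarith)
            (hre z (sphere_subset_closedBall hz))
    _ = (g c ^ (p : ℂ)).re := by rw [← hmean]; exact reCLM.circleAverage_comp_comm hint_cpow
    _ ≤ ‖g c‖ ^ p := (re_le_norm _).trans (norm_cpow_real _ _).le

theorem lintegral_Ioc_ofReal_circleMap {f : ℂ → ℝ} {c : ℂ} {R : ℝ} (hf : CircleIntegrable f c R)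
    (hf0 : ∀ z ∈ sphere c |R|, 0 ≤ f z) :
    ∫⁻ θ in Ioc 0 (2 * π), ENNReal.ofReal (f (circleMap c R θ)) =
      ENNReal.ofReal (2 * π * circleAverage f c R) := by
  rw [circleAverage_def, smul_eq_mul, ← mul_assoc, mul_inv_cancel₀ Real.two_pi_pos.ne', one_mul,
    intervalIntegral.integral_of_le Real.two_pi_pos.le,
    ofReal_integral_eq_lintegral_ofReal hf.1
      (.of_forall fun θ ↦ hf0 _ (circleMap_mem_sphere' c R θ))]

theorem one_half_lt_re_inv_one_sub {w : ℂ} (hw : ‖w‖ < 1) : 1 / 2 < (1 - w)⁻¹.re := by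
  have hw2 : w.re * w.re + w.im * w.im < 1 := by
    rw [← normSq_apply, normSq_eq_norm_sq]; nlinarith [norm_nonneg w]
  have hre : w.re < 1 := by nlinarith [mul_self_nonneg w.im]
  rw [inv_re, normSq_apply, lt_div_iff₀ (by simp only [sub_re, sub_im, one_re, one_im]; nlinarith)]
  simp only [sub_re, sub_im, one_re, one_im]
  nlinarith

noncomputable def cauchyTransform (μ : Measure ℂ) (z : ℂ) : ℂ := ∫ ζ, (ζ - z)⁻¹ ∂μ

theorem one_sub_norm_le_norm_sub_ae {μ : Measure ℂ} (hμ : ∀ᵐ ζ ∂μ, ‖ζ‖ = 1) {z : ℂ} :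
    ∀ᵐ ζ ∂μ, 1 - ‖z‖ ≤ ‖ζ - z‖ :=
  hμ.mono fun ζ hζ ↦ hζ ▸ norm_sub_norm_le ζ z

section CauchyTransform

variable {μ : Measure ℂ} [IsFiniteMeasure μ]

theorem integrable_inv_sub {z : ℂ} {δ : ℝ} (hδ : 0 < δ) (hsep : ∀ᵐ ζ ∂μ, δ ≤ ‖ζ - z‖) :
    Integrable (fun ζ ↦ (ζ - z)⁻¹) μ :=
  (integrable_const δ⁻¹).mono' (measurable_id.sub_const z).inv.aestronglyMeasurable
    (hsep.mono fun ζ hζ ↦ by rw [norm_inv]; exact inv_anti₀ hδ hζ)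

theorem hasDerivAt_cauchyTransform {z₀ : ℂ} {δ : ℝ} (hδ : 0 < δ)
    (hsep : ∀ᵐ ζ ∂μ, δ ≤ ‖ζ - z₀‖) :
    HasDerivAt (cauchyTransform μ) (∫ ζ, ((ζ - z₀) ^ 2)⁻¹ ∂μ) z₀ := by
  have hnear : ∀ᵐ ζ ∂μ, ∀ z ∈ ball z₀ (δ / 2), δ / 2 ≤ ‖ζ - z‖ := by
    filter_upwards [hsep] with ζ hζ z hz
    have := norm_sub_le_norm_sub_add_norm_sub ζ z z₀
    rw [mem_ball, dist_eq_norm] at hz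
    linarith
  refine (hasDerivAt_integral_of_dominated_loc_of_deriv_le (F := fun z ζ ↦ (ζ - z)⁻¹)
    (F' := fun z ζ ↦ ((ζ - z) ^ 2)⁻¹) (bound := fun _ ↦ ((δ / 2) ^ 2)⁻¹)
    (ball_mem_nhds z₀ (half_pos hδ))
    (.of_forall fun z ↦ (measurable_id.sub_const z).inv.aestronglyMeasurable)
    (integrable_inv_sub hδ hsep)
    ((measurable_id.sub_const z₀).pow_const 2).inv.aestronglyMeasurable ?_
    (integrable_const _) ?_).2
  · filter_upwards [hnear] with ζ hζ z hz
    rw [norm_inv, norm_pow]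
    exact inv_anti₀ (by positivity) (pow_le_pow_left₀ (by positivity) (hζ z hz) 2)
  · filter_upwards [hnear] with ζ hζ z hz
    have hne : ζ - z ≠ 0 := norm_pos_iff.1 ((half_pos hδ).trans_le (hζ z hz))
    exact (((hasDerivAt_id z).const_sub ζ).inv hne).congr_deriv (by simp)

variable (hμ : ∀ᵐ ζ ∂μ, ‖ζ‖ = 1)
include hμ

theorem differentiableOn_cauchyTransform : DifferentiableOn ℂ (cauchyTransform μ) (ball 0 1) :=
  fun _ hz ↦ (hasDerivAt_cauchyTransform (sub_pos.2 (mem_ball_zero_iff.1 hz))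
    (one_sub_norm_le_norm_sub_ae hμ)).differentiableAt.differentiableWithinAt

theorem norm_cauchyTransform_le {z : ℂ} (hz : ‖z‖ < 1) :
    ‖cauchyTransform μ z‖ ≤ (1 - ‖z‖)⁻¹ * μ.real univ :=
  norm_integral_le_of_norm_le_const <| (one_sub_norm_le_norm_sub_ae hμ).mono fun ζ hζ ↦ by
    rw [norm_inv]; exact inv_anti₀ (sub_pos.2 hz) hζ

theorem real_univ_add_mul_cauchyTransform {z : ℂ} (hz : ‖z‖ < 1) :
    (μ.real univ : ℂ) + z * cauchyTransform μ z = ∫ ζ, (1 + z * (ζ - z)⁻¹) ∂μ := by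
  rw [integral_add (integrable_const 1)
    ((integrable_inv_sub (sub_pos.2 hz) (one_sub_norm_le_norm_sub_ae hμ)).const_mul z),
    integral_const_mul, integral_const, cauchyTransform, real_smul, mul_one]

theorem real_univ_div_two_le_re_add_mul_cauchyTransform {z : ℂ} (hz : ‖z‖ < 1) :
    μ.real univ / 2 ≤ ((μ.real univ : ℂ) + z * cauchyTransform μ z).re := by
  have hint : Integrable (fun ζ ↦ 1 + z * (ζ - z)⁻¹) μ :=
    (integrable_const 1).add
      ((integrable_inv_sub (sub_pos.2 hz) (one_sub_norm_le_norm_sub_ae hμ)).const_mul z)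
  rw [real_univ_add_mul_cauchyTransform hμ hz, ← RCLike.re_to_complex, ← integral_re hint,
    div_eq_mul_one_div, ← smul_eq_mul, ← integral_const]
  refine integral_mono_ae (integrable_const _) hint.re ?_
  filter_upwards [hμ] with ζ hζ
  have hζ0 : ζ ≠ 0 := norm_ne_zero_iff.1 (by rw [hζ]; exact one_ne_zero)
  have hsub : ζ - z ≠ 0 := sub_ne_zero.2 fun h ↦ by rw [← h, hζ] at hz; exact lt_irrefl _ hz
  have hkernel : 1 + z * (ζ - z)⁻¹ = (1 - z / ζ)⁻¹ := by
    field_simp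
    ring
  rw [RCLike.re_to_complex, hkernel]
  exact (one_half_lt_re_inv_one_sub (by rwa [norm_div, hζ, div_one])).le

theorem norm_cauchyTransform_le_two_mul {z : ℂ} (hz : ‖z‖ < 1) :
    ‖cauchyTransform μ z‖ ≤
      2 * (‖(μ.real univ : ℂ) + z * cauchyTransform μ z‖ + μ.real univ) := by
  set M := μ.real univ
  set F := cauchyTransform μ z
  have hzF : ‖z * F‖ ≤ ‖(M : ℂ) + z * F‖ + M := by
    calc ‖z * F‖ = ‖((M : ℂ) + z * F) - M‖ := by rw [add_sub_cancel_left]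
      _ ≤ ‖(M : ℂ) + z * F‖ + ‖(M : ℂ)‖ := norm_sub_le _ _
      _ = ‖(M : ℂ) + z * F‖ + M := by rw [norm_real, Real.norm_of_nonneg measureReal_nonneg]
  rcases le_or_gt ‖z‖ (1 / 2) with hsmall | hlarge
  · calc ‖F‖ ≤ (1 - ‖z‖)⁻¹ * M := norm_cauchyTransform_le hμ hz
      _ ≤ 2 * M := by
          gcongr
          rw [inv_le_comm₀ (by linarith) two_pos]
          linarith
      _ ≤ 2 * (‖(M : ℂ) + z * F‖ + M) := by
          gcongr
          exact le_add_of_nonneg_left (norm_nonneg _)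
  · calc ‖F‖ ≤ 2 * ‖z * F‖ := by
          rw [norm_mul, ← mul_assoc]
          exact le_mul_of_one_le_left (norm_nonneg _) (by linarith)
      _ ≤ 2 * (‖(M : ℂ) + z * F‖ + M) := by gcongr

theorem norm_cauchyTransform_rpow_le {p : ℝ} (hp0 : 0 ≤ p) (hp1 : p ≤ 1) {z : ℂ} (hz : ‖z‖ < 1) :
    ‖cauchyTransform μ z‖ ^ p ≤
      2 ^ p * (‖(μ.real univ : ℂ) + z * cauchyTransform μ z‖ ^ p + μ.real univ ^ p) := by
  calc ‖cauchyTransform μ z‖ ^ p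
      ≤ (2 * (‖(μ.real univ : ℂ) + z * cauchyTransform μ z‖ + μ.real univ)) ^ p :=
        Real.rpow_le_rpow (norm_nonneg _) (norm_cauchyTransform_le_two_mul hμ hz) hp0
    _ = 2 ^ p * (‖(μ.real univ : ℂ) + z * cauchyTransform μ z‖ + μ.real univ) ^ p :=
        Real.mul_rpow two_pos.le (by positivity)
    _ ≤ 2 ^ p * (‖(μ.real univ : ℂ) + z * cauchyTransform μ z‖ ^ p + μ.real univ ^ p) := by
        gcongr
        exact Real.rpow_add_le_add_rpow (norm_nonneg _) measureReal_nonneg hp0 hp1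

theorem circleAverage_norm_real_univ_add_mul_cauchyTransform_rpow_le {p r : ℝ} (hp0 : 0 < p)
    (hp1 : p < 1) (hr : |r| < 1) :
    circleAverage (fun z ↦ ‖(μ.real univ : ℂ) + z * cauchyTransform μ z‖ ^ p) 0 r ≤
      μ.real univ ^ p / Real.cos (p * (π / 2)) := by
  rcases eq_zero_or_neZero μ with rfl | _
  · simp [cauchyTransform, Real.zero_rpow hp0.ne', circleAverage_const]
  have hball : closedBall (0 : ℂ) |r| ⊆ ball 0 1 := closedBall_subset_ball hr
  have hre : ∀ z ∈ closedBall (0 : ℂ) |r|,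
      0 < ((μ.real univ : ℂ) + z * cauchyTransform μ z).re := fun z hz ↦
    (half_pos measureReal_univ_pos).trans_le
      (real_univ_div_two_le_re_add_mul_cauchyTransform hμ (mem_ball_zero_iff.1 (hball hz)))
  simpa [Real.norm_of_nonneg measureReal_nonneg] using circleAverage_norm_rpow_le_of_re_pos
    ((differentiableOn_const _).add
      (differentiableOn_id.mul ((differentiableOn_cauchyTransform hμ).mono hball)))
    hre hp0.le hp1

theorem circleIntegrable_norm_cauchyTransform_rpow {p r : ℝ} (hp0 : 0 ≤ p) (hr : |r| < 1) :
    CircleIntegrable (fun z ↦ ‖cauchyTransform μ z‖ ^ p) 0 r :=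
  (((differentiableOn_cauchyTransform hμ).continuousOn.mono (sphere_subset_ball hr)).norm.rpow_const
    fun _ _ ↦ Or.inr hp0).circleIntegrable'

theorem circleAverage_norm_cauchyTransform_rpow_le {p r : ℝ} (hp0 : 0 < p) (hp1 : p < 1)
    (hr : |r| < 1) :
    circleAverage (fun z ↦ ‖cauchyTransform μ z‖ ^ p) 0 r ≤
      2 ^ p * (μ.real univ ^ p / Real.cos (p * (π / 2)) + μ.real univ ^ p) := by
  set M := μ.real univ
  set G := fun z ↦ (M : ℂ) + z * cauchyTransform μ z
  have hsphere : sphere (0 : ℂ) |r| ⊆ ball 0 1 := sphere_subset_ball hr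
  have hG : CircleIntegrable (fun z ↦ ‖G z‖ ^ p) 0 r :=
    ((continuousOn_const.add (continuousOn_id.mul
      ((differentiableOn_cauchyTransform hμ).continuousOn.mono hsphere))).norm.rpow_const
        fun _ _ ↦ Or.inr hp0.le).circleIntegrable'
  calc circleAverage (fun z ↦ ‖cauchyTransform μ z‖ ^ p) 0 r
      ≤ circleAverage (fun z ↦ (2 : ℝ) ^ p • (‖G z‖ ^ p + M ^ p)) 0 r :=
        circleAverage_mono (circleIntegrable_norm_cauchyTransform_rpow hμ hp0.le hr)
          (hG.add (circleIntegrable_const _ _ _)).const_smul fun z hz ↦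
            norm_cauchyTransform_rpow_le hμ hp0.le hp1.le (mem_ball_zero_iff.1 (hsphere hz))
    _ = 2 ^ p * (circleAverage (fun z ↦ ‖G z‖ ^ p) 0 r + M ^ p) := by
        rw [circleAverage_fun_smul, circleAverage_fun_add hG (circleIntegrable_const _ _ _),
          circleAverage_const, smul_eq_mul]
    _ ≤ 2 ^ p * (M ^ p / Real.cos (p * (π / 2)) + M ^ p) := by
        gcongr
        exact circleAverage_norm_real_univ_add_mul_cauchyTransform_rpow_le hμ hp0 hp1 hr

end CauchyTransform

/-- For a finite positive Borel measure `μ` on the unit circle and `0 < p < 1`, the Cauchy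
transform `F(z) = ∫ (ζ - z)⁻¹ dμ(ζ)` is analytic on the open unit disk and belongs to the
Hardy class `H^p(𝔻)`: its `p`-means over circles of radius `r < 1` are uniformly bounded. -/
theorem stmt13 (p : ℝ) (hp0 : 0 < p) (hp1 : p < 1)
    (μ : Measure ℂ) [IsFiniteMeasure μ]
    (hsupp : μ {z : ℂ | ‖z‖ ≠ 1} = 0) :
    DifferentiableOn ℂ (fun z : ℂ => ∫ ζ : ℂ, (ζ - z)⁻¹ ∂μ) (Metric.ball (0 : ℂ) 1) ∧
    ∃ C : ℝ, ∀ r : ℝ, 0 ≤ r → r < 1 →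
      (∫⁻ θ in Set.Ioc (0 : ℝ) (2 * Real.pi),
          ENNReal.ofReal (‖∫ ζ : ℂ, (ζ - (r : ℂ) * Complex.exp (θ * Complex.I))⁻¹ ∂μ‖ ^ p))
        ≤ ENNReal.ofReal C := by
  have hμ : ∀ᵐ ζ ∂μ, ‖ζ‖ = 1 := ae_iff.2 hsupp
  refine ⟨differentiableOn_cauchyTransform hμ,
    2 * π * (2 ^ p * (μ.real univ ^ p / Real.cos (p * (π / 2)) + μ.real univ ^ p)),
    fun r hr0 hr1 ↦ ?_⟩
  have hr : |r| < 1 := by rwa [abs_of_nonneg hr0]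
  have hcircle : ∀ θ : ℝ, (r : ℂ) * exp (θ * I) = circleMap 0 r θ := fun θ ↦ (zero_add _).symm
  simp_rw [hcircle]
  change ∫⁻ θ in Ioc 0 (2 * π), ENNReal.ofReal (‖cauchyTransform μ (circleMap 0 r θ)‖ ^ p) ≤ _
  rw [lintegral_Ioc_ofReal_circleMap (circleIntegrable_norm_cauchyTransform_rpow hμ hp0.le hr)
    fun _ _ ↦ by positivity]
  exact ENNReal.ofReal_le_ofReal (mul_le_mul_of_nonneg_left
    (circleAverage_norm_cauchyTransform_rpow_le hμ hp0 hp1 hr) two_pi_pos.le)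
end

section
/- Let $U$ be the bilateral shift on $\ell^2(\mathbb{Z})$, $R$ the diagonal operator with $R e_n = \rho_{|n|} e_n$, $\rho_n$ positive decreasing to $0$ with $\sum \rho_n = \infty$, and $T = \begin{pmatrix} U & R \\ 0 & U\end{pmatrix}$ on $H = \ell^2(\mathbb{Z})^2$. If $u = (u_1, u_2) \in H$ is such that the functions $\lambda \mapsto \langle (T - \lambda)^{-1} u, (e_j, 0)\rangle$ ($|\lambda| < 1$) all lie in $H^2(\mathbb{D})$ with norms bounded uniformly in $j \in \mathbb{Z}$, then $u_2 = 0$. -/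
noncomputable section

open scoped ENNReal

/-- `ℓ²(ℤ)`. -/
abbrev Hl := lp (fun _ : ℤ => ℂ) 2

/-- Standard basis vectors of `ℓ²(ℤ)`. -/
def e (j : ℤ) : Hl := lp.single 2 j 1

/-- `H = ℓ²(ℤ) ⊕ ℓ²(ℤ)` (Hilbert direct sum). -/
abbrev H2 := WithLp 2 (Hl × Hl)

/-- Inclusion of pairs into the direct sum. -/
def pair (x : Hl × Hl) : H2 := (WithLp.equiv 2 (Hl × Hl)).symm x

/-!
Writing out `(T - λ) x = u` in coordinates and summing against `λ ^ k`, the series telescope and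
give `x₁ j = ∑ₖ cⱼ(k) λᵏ` with `cⱼ(k) = u₁ (j+1+k) - (ρ_{|j+1|} + ⋯ + ρ_{|j+k+1|}) u₂ (j+2+k)`.
So each matrix coefficient of the resolvent is, up to conjugation, a power series on the unit disc,
and the Cauchy estimates together with `‖g‖ ≤ (‖g‖² + 1) / 2` turn the uniform `H²` bound into a
bound on all `cⱼ(k)`, uniform in `j` and `k`. For `j = m-2-n`, `k = n` the coefficient is
`u₁ (m-1) - (ρ_{|m-1-n|} + ⋯ + ρ_{|m-1|}) u₂ m`, and the bracket diverges as `n → ∞` because `ρ`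
decreases and is not summable; hence `u₂ m = 0`.
-/

open scoped NNReal
open Filter Topology MeasureTheory FormalMultilinearSeries

lemma lp_single_eq_smul_e (i : ℤ) (a : ℂ) : lp.single 2 i a = a • e i := by
  rw [e, ← lp.single_smul, smul_eq_mul, mul_one]

lemma ext_continuousLinearMap_e {F : Type*} [NormedAddCommGroup F] [NormedSpace ℂ F]
    {A B : Hl →L[ℂ] F} (h : ∀ i, A (e i) = B (e i)) : A = B :=
  lp.ext_continuousLinearMap (by norm_num) fun i => by
    ext
    simp [lp_single_eq_smul_e, h]

lemma apply_apply_eq_of_apply_e {A : Hl →L[ℂ] Hl} {n m : ℤ} (c : ℂ)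
    (h : ∀ i, A (e i) n = c * e i m) (f : Hl) : A f n = c * f m := by
  have : (lp.evalCLM ℂ _ 2 n).comp A = c • lp.evalCLM ℂ _ 2 m :=
    ext_continuousLinearMap_e fun i => by simpa [lp.evalCLM] using h i
  simpa [lp.evalCLM] using DFunLike.congr_fun this f

lemma e_apply (i n : ℤ) : e i n = if n = i then 1 else 0 := by
  simp [e, lp.single_apply, Pi.single_apply]

lemma shift_apply {U : Hl →L[ℂ] Hl} (hU : ∀ n : ℤ, U (e n) = e (n + 1)) (f : Hl) (n : ℤ) :
    U f n = f (n - 1) := by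
  simpa using apply_apply_eq_of_apply_e (n := n) (m := n - 1) 1 (fun i => by
    simp only [hU, e_apply, one_mul, sub_eq_iff_eq_add]) f

lemma diagonal_apply {d : ℤ → ℂ} {R : Hl →L[ℂ] Hl} (hR : ∀ n : ℤ, R (e n) = d n • e n)
    (f : Hl) (n : ℤ) : R f n = d n * f n :=
  apply_apply_eq_of_apply_e (d n) (fun i => by
    rw [hR, lp.coeFn_smul, Pi.smul_apply, smul_eq_mul, e_apply]
    split_ifs with h <;> simp [h]) f

@[simp] lemma pair_fst (x : Hl × Hl) : (pair x).fst = x.1 := rfl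

@[simp] lemma pair_snd (x : Hl × Hl) : (pair x).snd = x.2 := rfl

lemma inner_pair_e_zero (x : H2) (j : ℤ) :
    (inner ℂ x (pair (e j, 0)) : ℂ) = (starRingEnd ℂ) (x.fst j) := by
  simp [pair, WithLp.prod_inner_apply, e, lp.inner_single_right]

lemma Summable.hasSum_sub_succ {G : Type*} [AddCommGroup G] [TopologicalSpace G]
    [IsTopologicalAddGroup G] {f : ℕ → G} (hf : Summable f) : HasSum (fun k => f k - f (k + 1)) (f 0) := by
  simpa using hf.hasSum.sub ((hasSum_nat_add_iff' 1).mpr hf.hasSum)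

lemma summable_affine_mul_geometric {r : ℝ} (hr0 : 0 ≤ r) (hr : r < 1) (A B : ℝ) :
    Summable (fun k : ℕ => (A + B * k) * r ^ k) := by
  have hr' : ‖r‖ < 1 := by rwa [Real.norm_of_nonneg hr0]
  have h1 := (summable_geometric_of_lt_one hr0 hr).mul_left A
  have h2 := (summable_pow_mul_geometric_of_norm_lt_one 1 hr').mul_left B
  simpa [add_mul, mul_assoc] using h1.add h2

lemma summable_of_norm_le_affine_mul_geometric {f : ℕ → ℂ} {r : ℝ} (hr0 : 0 ≤ r) (hr : r < 1)
    (A B : ℝ) (hf : ∀ k, ‖f k‖ ≤ (A + B * k) * r ^ k) : Summable f :=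
  (summable_affine_mul_geometric hr0 hr A B).of_norm_bounded hf

def rhoSum (ρ : ℕ → ℝ) (j : ℤ) (k : ℕ) : ℝ := ∑ i ∈ Finset.range k, ρ (j + 1 + i).natAbs

lemma rhoSum_succ (ρ : ℕ → ℝ) (j : ℤ) (k : ℕ) :
    rhoSum ρ j (k + 1) = rhoSum ρ j k + ρ (j + 1 + k).natAbs :=
  Finset.sum_range_succ _ _

lemma abs_rhoSum_le {ρ : ℕ → ℝ} {B : ℝ} (hρ : ∀ n, |ρ n| ≤ B) (j : ℤ) (k : ℕ) :
    |rhoSum ρ j k| ≤ k * B :=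
  (Finset.abs_sum_le_sum_abs _ _).trans <| by
    simpa using Finset.sum_le_sum fun i (_ : i ∈ Finset.range k) => hρ (j + 1 + i).natAbs

def resolventCoeff (ρ : ℕ → ℝ) (u₁ u₂ : ℤ → ℂ) (j : ℤ) (k : ℕ) : ℂ :=
  u₁ (j + 1 + k) - rhoSum ρ j (k + 1) * u₂ (j + 2 + k)

lemma hasSum_resolventCoeff {ρ : ℕ → ℝ} {B : ℝ} (hρ : ∀ n, |ρ n| ≤ B)
    {x₁ x₂ y₁ y₂ : ℤ → ℂ} {M : ℝ} (hx₁ : ∀ n, ‖x₁ n‖ ≤ M) (hx₂ : ∀ n, ‖x₂ n‖ ≤ M)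
    {z : ℂ} (hz : ‖z‖ < 1)
    (hy₁ : ∀ n, y₁ n = x₁ (n - 1) + ρ n.natAbs * x₂ n - z * x₁ n)
    (hy₂ : ∀ n, y₂ n = x₂ (n - 1) - z * x₂ n) (j : ℤ) :
    HasSum (fun k => resolventCoeff ρ y₁ y₂ j k * z ^ k) (x₁ j) := by
  set a : ℕ → ℂ := fun k => x₁ (j + k) * z ^ k
  set b : ℕ → ℂ := fun k => rhoSum ρ j k * x₂ (j + 1 + k) * z ^ k
  set c : ℕ → ℂ := fun k => ρ (j + 1 + k).natAbs * x₂ (j + 1 + k) * z ^ k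
  have hz0 := norm_nonneg z
  have hM : 0 ≤ M := (norm_nonneg _).trans (hx₁ 0)
  have ha : Summable a := summable_of_norm_le_affine_mul_geometric hz0 hz M 0 fun k => by
    simpa [a, norm_mul, norm_pow] using mul_le_mul_of_nonneg_right (hx₁ _) (pow_nonneg hz0 k)
  have hb : Summable b := summable_of_norm_le_affine_mul_geometric hz0 hz 0 (B * M) fun k => by
    have hs := abs_rhoSum_le hρ j k
    have := mul_le_mul hs (hx₂ (j + 1 + k)) (norm_nonneg _) ((abs_nonneg _).trans hs)
    simp only [b, norm_mul, norm_pow, Complex.norm_real, Real.norm_eq_abs]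
    nlinarith [pow_nonneg hz0 k]
  have hc : Summable c := summable_of_norm_le_affine_mul_geometric hz0 hz (B * M) 0 fun k => by
    have := mul_le_mul (hρ (j + 1 + k).natAbs) (hx₂ (j + 1 + k)) (norm_nonneg _)
      ((abs_nonneg _).trans (hρ 0))
    simp only [c, norm_mul, norm_pow, Complex.norm_real, Real.norm_eq_abs]
    nlinarith [pow_nonneg hz0 k]
  have h₁ : HasSum (fun k : ℕ => y₁ (j + 1 + k) * z ^ k) (a 0 + ∑' k, c k) := by
    have hterm : ∀ k : ℕ, y₁ (j + 1 + k) * z ^ k = a k - a (k + 1) + c k := fun k => by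
      simp only [a, c, hy₁]
      push_cast
      ring_nf
    simp only [hterm]
    exact ha.hasSum_sub_succ.add hc.hasSum
  have h₂ : HasSum (fun k : ℕ => rhoSum ρ j (k + 1) * y₂ (j + 2 + k) * z ^ k)
      (∑' k, c k + b 0) := by
    have hterm : ∀ k : ℕ, rhoSum ρ j (k + 1) * y₂ (j + 2 + k) * z ^ k
        = c k + (b k - b (k + 1)) := fun k => by
      simp only [b, c, hy₂, rhoSum_succ]
      push_cast
      ring_nf
    simp only [hterm]
    exact hc.hasSum.add hb.hasSum_sub_succ
  have hterm : (fun k => resolventCoeff ρ y₁ y₂ j k * z ^ k) = fun k : ℕ =>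
      y₁ (j + 1 + k) * z ^ k - rhoSum ρ j (k + 1) * y₂ (j + 2 + k) * z ^ k := by
    funext k
    simp only [resolventCoeff]
    ring
  have hval : x₁ j = (a 0 + ∑' k, c k) - (∑' k, c k + b 0) := by simp [a, b, rhoSum]
  rw [hterm, hval]
  exact h₁.sub h₂

lemma hasSum_resolventCoeff_of_apply_eq {ρ : ℕ → ℝ} {B : ℝ} (hρ : ∀ n, |ρ n| ≤ B)
    {U R : Hl →L[ℂ] Hl} (hU : ∀ n : ℤ, U (e n) = e (n + 1))
    (hR : ∀ n : ℤ, R (e n) = ((ρ n.natAbs : ℝ) : ℂ) • e n)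
    {T : H2 →L[ℂ] H2} (hT : ∀ x : Hl × Hl, T (pair x) = pair (U x.1 + R x.2, U x.2))
    {z : ℂ} (hz : ‖z‖ < 1) {x u : H2} (hx : (T - z • ContinuousLinearMap.id ℂ H2) x = u)
    (j : ℤ) : HasSum (fun k => resolventCoeff ρ u.fst u.snd j k * z ^ k) (x.fst j) := by
  have hu : u = pair (U x.fst + R x.snd - z • x.fst, U x.snd - z • x.snd) := by
    rw [← hx]
    exact congrArg (· - z • x) (hT (x.fst, x.snd))
  refine hasSum_resolventCoeff hρ (M := ‖x‖)
    (fun n => (lp.norm_apply_le_norm two_ne_zero _ n).trans (WithLp.norm_fst_le _ x))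
    (fun n => (lp.norm_apply_le_norm two_ne_zero _ n).trans (WithLp.norm_snd_le _ x)) hz
    (fun n => ?_) (fun n => ?_) j
  all_goals
    rw [hu]
    simp only [pair_fst, pair_snd, lp.coeFn_sub, lp.coeFn_add, lp.coeFn_smul, Pi.add_apply,
      Pi.sub_apply, Pi.smul_apply, smul_eq_mul, shift_apply hU, diagonal_apply hR]

lemma hasFPowerSeriesOnBall_ofScalars_sum {a : ℕ → ℂ} (A B : ℝ)
    (ha : ∀ k, ‖a k‖ ≤ A + B * k) :
    HasFPowerSeriesOnBall (ofScalars ℂ a).sum (ofScalars ℂ a) 0 1 := by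
  have hrad : 1 ≤ (ofScalars ℂ a).radius := ENNReal.le_of_forall_nnreal_lt fun r hr => by
    refine le_radius_of_summable _ <| (summable_affine_mul_geometric r.2 ?_ A B).of_nonneg_of_le
      (fun k => by positivity) fun k => ?_
    · exact_mod_cast hr
    · rw [ofScalars_norm]
      exact mul_le_mul_of_nonneg_right (ha k) (by positivity)
  exact ((ofScalars ℂ a).hasFPowerSeriesOnBall (zero_lt_one.trans_le hrad)).mono one_pos hrad

lemma mem_eball_zero_one {z : ℂ} (hz : ‖z‖ < 1) : z ∈ Metric.eball (0 : ℂ) 1 := by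
  simpa [← ofReal_norm] using hz

lemma HasFPowerSeriesOnBall.hasSum_ofScalars {f : ℂ → ℂ} {a : ℕ → ℂ}
    (hf : HasFPowerSeriesOnBall f (ofScalars ℂ a) 0 1) {z : ℂ} (hz : ‖z‖ < 1) :
    HasSum (fun k => a k * z ^ k) (f z) := by
  simpa only [ofScalars_apply_eq, smul_eq_mul, zero_add] using hf.hasSum (mem_eball_zero_one hz)

lemma norm_coeff_mul_pow_le_integral {f : ℂ → ℂ} {a : ℕ → ℂ}
    (hf : HasFPowerSeriesOnBall f (ofScalars ℂ a) 0 1) {r : ℝ} (hr0 : 0 < r) (hr1 : r < 1)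
    (n : ℕ) :
    ‖a n‖ * r ^ n ≤ (2 * Real.pi)⁻¹ * ∫ θ in 0..2 * Real.pi, ‖f (circleMap 0 r θ)‖ := by
  lift r to ℝ≥0 using hr0.le
  have hd : DifferentiableOn ℂ f (Metric.closedBall 0 r) :=
    hf.differentiableOn.mono fun z hz =>
      mem_eball_zero_one ((mem_closedBall_zero_iff.mp hz).trans_lt hr1)
  have hp := hf.hasFPowerSeriesAt.eq_formalMultilinearSeries
    (hd.hasFPowerSeriesOnBall (by exact_mod_cast hr0)).hasFPowerSeriesAt
  have h := norm_cauchyPowerSeries_le f 0 r n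
  rw [← hp, ofScalars_norm, abs_of_pos (by exact_mod_cast hr0), inv_pow] at h
  rwa [← le_div_iff₀ (by positivity), div_eq_mul_inv]

lemma integral_norm_le_of_lintegral_sq_le {g : ℝ → ℂ} (hg : Continuous g) {a b C : ℝ}
    (hab : a ≤ b) (hC : 0 ≤ C)
    (h : ∫⁻ x in Set.Ioc a b, ENNReal.ofReal (‖g x‖ ^ 2) ≤ ENNReal.ofReal C) :
    ∫ x in a..b, ‖g x‖ ≤ (C + (b - a)) / 2 := by
  have hAMGM : ∀ x, 2 * ENNReal.ofReal ‖g x‖ ≤ ENNReal.ofReal (‖g x‖ ^ 2) + 1 := fun x => by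
    rw [← ENNReal.ofReal_ofNat 2, ← ENNReal.ofReal_mul zero_le_two, ← ENNReal.ofReal_one,
      ← ENNReal.ofReal_add (by positivity) zero_le_one]
    exact ENNReal.ofReal_le_ofReal (by nlinarith [sq_nonneg (‖g x‖ - 1)])
  have hlin : 2 * ∫⁻ x in Set.Ioc a b, ENNReal.ofReal ‖g x‖ ≤ ENNReal.ofReal (C + (b - a)) := by
    calc 2 * ∫⁻ x in Set.Ioc a b, ENNReal.ofReal ‖g x‖
        = ∫⁻ x in Set.Ioc a b, 2 * ENNReal.ofReal ‖g x‖ := (lintegral_const_mul' _ _ (by simp)).symm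
      _ ≤ ∫⁻ x in Set.Ioc a b, (ENNReal.ofReal (‖g x‖ ^ 2) + 1) := lintegral_mono hAMGM
      _ = (∫⁻ x in Set.Ioc a b, ENNReal.ofReal (‖g x‖ ^ 2)) + ENNReal.ofReal (b - a) := by
          rw [lintegral_add_right _ measurable_const]
          simp
      _ ≤ ENNReal.ofReal C + ENNReal.ofReal (b - a) := by gcongr
      _ = ENNReal.ofReal (C + (b - a)) := (ENNReal.ofReal_add hC (sub_nonneg.mpr hab)).symm
  rw [intervalIntegral.integral_of_le hab, integral_eq_lintegral_of_nonneg_ae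
    (Eventually.of_forall fun _ => norm_nonneg _) hg.norm.aestronglyMeasurable]
  have := ENNReal.toReal_mono ENNReal.ofReal_ne_top hlin
  rw [ENNReal.toReal_mul, ENNReal.toReal_ofReal (by linarith)] at this
  simp only [ENNReal.toReal_ofNat] at this
  linarith

lemma norm_coeff_le_of_lintegral_sq_le {f : ℂ → ℂ} {a : ℕ → ℂ}
    (hf : HasFPowerSeriesOnBall f (ofScalars ℂ a) 0 1) {C : ℝ} (hC : 0 ≤ C)
    (h : ∀ r : ℝ, 0 < r → r < 1 → ∫⁻ θ in Set.Ioc 0 (2 * Real.pi),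
      ENNReal.ofReal (‖f (circleMap 0 r θ)‖ ^ 2) ≤ ENNReal.ofReal C) (n : ℕ) :
    ‖a n‖ ≤ (C + 2 * Real.pi) / (4 * Real.pi) := by
  have hπ := Real.pi_pos
  have hr : ∀ r ∈ Set.Ioo (0 : ℝ) 1, ‖a n‖ * r ^ n ≤ (C + 2 * Real.pi) / (4 * Real.pi) := by
    rintro r ⟨hr0, hr1⟩
    have hcont : Continuous fun θ => f (circleMap 0 r θ) :=
      hf.differentiableOn.continuousOn.comp_continuous (continuous_circleMap 0 r) fun θ =>
        mem_eball_zero_one (by simpa [abs_of_pos hr0] using hr1)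
    have hint := integral_norm_le_of_lintegral_sq_le hcont (by positivity) hC (h r hr0 hr1)
    calc ‖a n‖ * r ^ n ≤ (2 * Real.pi)⁻¹ * ∫ θ in 0..2 * Real.pi, ‖f (circleMap 0 r θ)‖ :=
          norm_coeff_mul_pow_le_integral hf hr0 hr1 n
      _ ≤ (2 * Real.pi)⁻¹ * ((C + (2 * Real.pi - 0)) / 2) := by gcongr
      _ = (C + 2 * Real.pi) / (4 * Real.pi) := by field_simp; ring
  have hlim : Tendsto (fun r : ℝ => ‖a n‖ * r ^ n) (𝓝[<] 1) (𝓝 (‖a n‖ * 1 ^ n)) :=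
    ((continuous_pow n).const_mul _ |>.tendsto 1).mono_left nhdsWithin_le_nhds
  simpa using le_of_tendsto hlim (eventually_of_mem (Ioo_mem_nhdsLT one_pos) hr)

lemma norm_resolventCoeff_le {ρ : ℕ → ℝ} {B : ℝ} (hρ : ∀ n, |ρ n| ≤ B) (u₁ u₂ : Hl)
    (j : ℤ) (k : ℕ) : ‖resolventCoeff ρ u₁ u₂ j k‖ ≤ (‖u₁‖ + B * ‖u₂‖) + B * ‖u₂‖ * k := by
  have h₁ := lp.norm_apply_le_norm two_ne_zero u₁ (j + 1 + k)
  have h₂ := lp.norm_apply_le_norm two_ne_zero u₂ (j + 2 + k)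
  have hs := abs_rhoSum_le hρ j (k + 1)
  have := mul_le_mul hs h₂ (norm_nonneg _) ((abs_nonneg _).trans hs)
  calc ‖resolventCoeff ρ u₁ u₂ j k‖
      ≤ ‖u₁ (j + 1 + k)‖ + |rhoSum ρ j (k + 1)| * ‖u₂ (j + 2 + k)‖ := by
        simpa [resolventCoeff] using
          norm_sub_le (u₁ (j + 1 + k)) (rhoSum ρ j (k + 1) * u₂ (j + 2 + k))
    _ ≤ (‖u₁‖ + B * ‖u₂‖) + B * ‖u₂‖ * k := by push_cast at this; nlinarith

lemma resolventCoeff_sub_two_sub (ρ : ℕ → ℝ) (u₁ u₂ : ℤ → ℂ) (m : ℤ) (n : ℕ) :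
    resolventCoeff ρ u₁ u₂ (m - 2 - n) n = u₁ (m - 1) - rhoSum ρ (m - 2 - n) (n + 1) * u₂ m := by
  simp only [resolventCoeff]
  ring_nf

lemma tendsto_rhoSum_sub_two_sub {ρ : ℕ → ℝ} (hρ : ∀ n, 0 ≤ ρ n) (hmono : Antitone ρ)
    (hdiv : ¬ Summable ρ) (m : ℤ) :
    Tendsto (fun n : ℕ => rhoSum ρ (m - 2 - n) (n + 1)) atTop atTop := by
  set d := (m - 1).natAbs
  have hshift : Tendsto (fun n : ℕ => ∑ i ∈ Finset.range n, ρ (i + d)) atTop atTop :=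
    (not_summable_iff_tendsto_nat_atTop_of_nonneg fun _ => hρ _).mp
      ((summable_nat_add_iff d).not.mpr hdiv)
  refine tendsto_atTop_mono (fun n => ?_) (hshift.comp (tendsto_add_atTop_nat 1))
  rw [Function.comp_apply, rhoSum, ← Finset.sum_range_reflect]
  -- after reflection the `i`-th term is `ρ |m - 1 - i|`, and `|m - 1 - i| ≤ d + i`
  refine Finset.sum_le_sum fun i hi => hmono ?_
  have := Finset.mem_range.mp hi
  omega

lemma eq_zero_of_forall_norm_sub_mul_le {s : ℕ → ℝ} (hs : Tendsto s atTop atTop) {a b : ℂ}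
    {K : ℝ} (h : ∀ n, ‖a - s n * b‖ ≤ K) : b = 0 := by
  by_contra hb
  have hb' : 0 < ‖b‖ := norm_pos_iff.mpr hb
  obtain ⟨n, hn⟩ := (hs.eventually_gt_atTop ((K + ‖a‖) / ‖b‖)).exists
  have h₁ : s n * ‖b‖ ≤ ‖(s n : ℂ) * b‖ := by
    rw [norm_mul, Complex.norm_real, Real.norm_eq_abs]
    exact mul_le_mul_of_nonneg_right (le_abs_self _) hb'.le
  have h₂ := norm_sub_norm_le ((s n : ℂ) * b) a
  rw [norm_sub_rev] at h₂
  rw [div_lt_iff₀ hb'] at hn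
  linarith [h n]

theorem stmt17_general (ρ : ℕ → ℝ) (hpos : ∀ n, 0 < ρ n) (hmono : Antitone ρ)
    (hdiv : ¬ Summable ρ)
    (U R : Hl →L[ℂ] Hl)
    (hU : ∀ n : ℤ, U (e n) = e (n + 1))
    (hR : ∀ n : ℤ, R (e n) = ((ρ n.natAbs : ℝ) : ℂ) • e n)
    (T : H2 →L[ℂ] H2)
    (hT : ∀ x : Hl × Hl, T (pair x) = pair (U x.1 + R x.2, U x.2))
    (Res : ℂ → H2 →L[ℂ] H2)
    (hRes : ∀ lam : ℂ, ‖lam‖ < 1 →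
      (Res lam).comp (T - lam • ContinuousLinearMap.id ℂ H2) = ContinuousLinearMap.id ℂ H2 ∧
      (T - lam • ContinuousLinearMap.id ℂ H2).comp (Res lam) = ContinuousLinearMap.id ℂ H2)
    (u : H2)
    (hbound : ∃ C : ℝ, ∀ (j : ℤ) (r : ℝ), 0 ≤ r → r < 1 →
      (∫⁻ θ in Set.Ioc (0 : ℝ) (2 * Real.pi),
          ENNReal.ofReal
            (‖(inner ℂ (Res ((r : ℂ) * Complex.exp (θ * Complex.I)) u) (pair (e j, 0)) : ℂ)‖ ^ 2))
        ≤ ENNReal.ofReal C) :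
    ((WithLp.equiv 2 (Hl × Hl)) u).2 = 0 := by
  obtain ⟨C, hC⟩ := hbound
  have hρ : ∀ n, |ρ n| ≤ ρ 0 := fun n => by
    rw [abs_of_pos (hpos n)]
    exact hmono (Nat.zero_le n)
  have hcoeff : ∀ j k,
      ‖resolventCoeff ρ u.fst u.snd j k‖ ≤ (max C 0 + 2 * Real.pi) / (4 * Real.pi) := by
    intro j
    have hf := hasFPowerSeriesOnBall_ofScalars_sum _ _ (norm_resolventCoeff_le hρ u.fst u.snd j)
    refine norm_coeff_le_of_lintegral_sq_le hf (le_max_right C 0) fun r hr0 hr1 => ?_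
    refine le_trans (le_of_eq (lintegral_congr fun θ => ?_))
      ((hC j r hr0.le hr1).trans (ENNReal.ofReal_le_ofReal (le_max_left C 0)))
    have hz : ‖(r : ℂ) * Complex.exp (θ * Complex.I)‖ < 1 := by
      simpa [abs_of_pos hr0] using hr1
    have hx : (T - _ • ContinuousLinearMap.id ℂ H2) (Res _ u) = u :=
      DFunLike.congr_fun (hRes _ hz).2 u
    have hfx := (hf.hasSum_ofScalars hz).unique
      (hasSum_resolventCoeff_of_apply_eq hρ hU hR hT hz hx j)
    rw [inner_pair_e_zero, RCLike.norm_conj, ← hfx, circleMap, zero_add]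
  have hzero : ∀ m, u.snd m = 0 := fun m =>
    eq_zero_of_forall_norm_sub_mul_le
      (tendsto_rhoSum_sub_two_sub (fun n => (hpos n).le) hmono hdiv m)
      (fun n => by simpa only [resolventCoeff_sub_two_sub] using hcoeff (m - 2 - n) n)
  exact lp.ext (funext hzero)

/-- With `U` the bilateral shift, `R e_n = ρ_{|n|} e_n` (`ρ` positive, decreasing to `0`,
non-summable) and `T = [[U, R], [0, U]]`: if `u = (u₁, u₂)` is such that the functions
`λ ↦ ⟨(T-λ)⁻¹ u, (e_j, 0)⟩` (`|λ| < 1`) all lie in `H²(𝔻)` with norms (circle `2`-means)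
bounded uniformly in `j`, then `u₂ = 0`. -/
theorem stmt17 (ρ : ℕ → ℝ) (hpos : ∀ n, 0 < ρ n) (hmono : Antitone ρ)
    (hlim : Filter.Tendsto ρ Filter.atTop (nhds 0)) (hdiv : ¬ Summable ρ)
    (U R : Hl →L[ℂ] Hl)
    (hU : ∀ n : ℤ, U (e n) = e (n + 1))
    (hR : ∀ n : ℤ, R (e n) = ((ρ n.natAbs : ℝ) : ℂ) • e n)
    (T : H2 →L[ℂ] H2)
    (hT : ∀ x : Hl × Hl, T (pair x) = pair (U x.1 + R x.2, U x.2))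
    (Res : ℂ → H2 →L[ℂ] H2)
    (hRes : ∀ lam : ℂ, ‖lam‖ < 1 →
      (Res lam).comp (T - lam • ContinuousLinearMap.id ℂ H2) = ContinuousLinearMap.id ℂ H2 ∧
      (T - lam • ContinuousLinearMap.id ℂ H2).comp (Res lam) = ContinuousLinearMap.id ℂ H2)
    (u : H2)
    (hbound : ∃ C : ℝ, ∀ (j : ℤ) (r : ℝ), 0 ≤ r → r < 1 →
      (∫⁻ θ in Set.Ioc (0 : ℝ) (2 * Real.pi),
          ENNReal.ofReal
            (‖(inner ℂ (Res ((r : ℂ) * Complex.exp (θ * Complex.I)) u) (pair (e j, 0)) : ℂ)‖ ^ 2))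
        ≤ ENNReal.ofReal C) :
    ((WithLp.equiv 2 (Hl × Hl)) u).2 = 0 :=
  stmt17_general ρ hpos hmono hdiv U R hU hR T hT Res hRes u hbound
end
end
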